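/- Let Υ ∈ (0,∞) and let φ : ℝ → [0,∞) be even and continuous with φ(u) > 0 for |u| < Υ, φ(u) = 0 for |u| ≥ Υ, and such that lim_{u→Υ⁻} φ(u)/(Υ − u)^{N₁} exists and is positive for some N₁ ≥ 2. Let κ₀ and τ_*(k), 0 ≤ |k| ≤ κ₀, be as constructed from the dispersion relation (τ_*(0) = √(2∫φ), and for 0 < |k| ≤ κ₀, τ_*(k) ≥ 2|k|Υ + |k|² is the unique solution of ∫ φ(u)/((τ_*(k)/2 − |k|u)² − |k|⁴/4) du = 2). For n ∈ {0,1} and m ≥ 0 define I_{n,m}(k) := ∫_{−Υ}^{Υ} (τ_*(k)/2 − |k|u)^n u^m φ(u) / ( (τ_*(k)/2 − |k|u)² − |k|⁴/4 )² du. Then all these integrals converge, and for every l ≥ 0 and n ∈ {0,1} there are positive constants c₀, C₀ (depending on l) such that c₀ ≤ I_{n,2l}(k) ≤ C₀ and c₀|k| ≤ I_{n,2l+1}(k) ≤ C₀|k| for all 0 ≤ |k| ≤ κ₀. -/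

import Mathlib

/-!
Write `a = τ_*(r)/2` and `D(u) = (a - r u)² - r⁴/4 = (a - r u - r²/2)(a - r u + r²/2)`.
The dispersion relation `∫ φ / D = 2` bounds `a - rΥ` below and `a + rΥ` above by constants
independent of `r ∈ [0, κ₀]`. With `a ≥ rΥ + r²/2`, which gives `a - r u - r²/2 ≥ r (Υ - u)`,
this bounds `D²` below by a multiple of `(Υ - u)²`, and the quadratic vanishing of `φ` at `Υ`
(from `N₁ ≥ 2`) absorbs it: `φ / D²` is uniformly bounded. This gives convergence and all the
upper bounds, and `φ ≥ δ > 0` on `[Υ/4, Υ/2]` gives the lower bound for even `m`. For odd `m`,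
pairing `u` with `-u` produces `uᵐ φ(u) (xⁿ/(x² - c)² - yⁿ/(y² - c)²)` with `x = a - r u`,
`y = a + r u`, `c = r⁴/4`; this difference is `y - x = 2 r u` times a quantity bounded above
and below by positive constants, which is where the factor `r` comes from.
-/

open MeasureTheory

/-- The integrals
`I_{n,m}(k) = ∫_{−Υ}^{Υ} (τ_*(k)/2 − |k|u)^n u^m φ(u) / ((τ_*(k)/2 − |k|u)² − |k|⁴/4)² du`,
expressed in the radial variable `r = |k|`. -/
noncomputable def Ifun (φ : ℝ → ℝ) (Υ : ℝ) (τstar : ℝ → ℝ) (n m : ℕ) (r : ℝ) : ℝ :=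
  ∫ u in Set.Ioo (-Υ) Υ,
    (τstar r / 2 - r * u) ^ n * u ^ m * φ u /
      ((τstar r / 2 - r * u) ^ 2 - r ^ 4 / 4) ^ 2

open Set Filter Topology

theorem exists_pos_le_of_continuousOn {α : Type*} [TopologicalSpace α] {f : α → ℝ} {s : Set α}
    (hs : IsCompact s) (hne : s.Nonempty) (hf : ContinuousOn f s) (hpos : ∀ x ∈ s, 0 < f x) :
    ∃ δ, 0 < δ ∧ ∀ x ∈ s, δ ≤ f x := by
  obtain ⟨x₀, hx₀, hmin⟩ := hs.exists_isMinOn hne hf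
  exact ⟨f x₀, hpos x₀ hx₀, fun x hx => hmin hx⟩

theorem exists_le_mul_sq_of_tendsto {f : ℝ → ℝ} {a b N L : ℝ} (hf : ContinuousOn f (Icc a b))
    (hN : 2 ≤ N) (hlim : Tendsto (fun u => f u / (b - u) ^ N) (𝓝[<] b) (𝓝 L)) :
    ∃ K, 0 < K ∧ ∀ u ∈ Ico a b, f u ≤ K * (b - u) ^ 2 := by
  have hev : ∀ᶠ u in 𝓝[<] b, f u / (b - u) ^ N < |L| + 1 :=
    hlim.eventually (eventually_lt_nhds (by linarith [le_abs_self L]))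
  obtain ⟨l, hl, hsub⟩ := mem_nhdsLT_iff_exists_Ioo_subset.1 hev
  obtain ⟨C, hC⟩ := isCompact_Icc.exists_bound_of_continuousOn hf
  set ε := min (b - l) 1
  have hε : 0 < ε := lt_min (by linarith [mem_Iio.1 hl]) one_pos
  refine ⟨|L| + 1 + |C| / ε ^ 2, by positivity, fun u hu => ?_⟩
  rcases lt_or_ge (b - u) ε with hnear | hfar
  · have hbu : 0 < b - u := by linarith [hu.2]
    have hlt : f u / (b - u) ^ N < |L| + 1 :=
      hsub ⟨by linarith [min_le_left (b - l) 1], hu.2⟩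
    have hpow : (b - u) ^ N ≤ (b - u) ^ 2 := by
      rw [← Real.rpow_two]
      exact Real.rpow_le_rpow_of_exponent_ge hbu (by linarith [min_le_right (b - l) 1]) hN
    rw [div_lt_iff₀ (Real.rpow_pos_of_pos hbu N)] at hlt
    nlinarith [mul_le_mul_of_nonneg_left hpow (by positivity : (0 : ℝ) ≤ |L| + 1),
      div_nonneg (abs_nonneg C) (sq_nonneg ε), sq_nonneg (b - u)]
  · have hfu : f u ≤ |C| := (le_abs_self _).trans ((hC u (Ico_subset_Icc_self hu)).trans
      (le_abs_self C))
    have : |C| ≤ |C| / ε ^ 2 * (b - u) ^ 2 := by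
      rw [div_mul_eq_mul_div, le_div_iff₀ (by positivity)]
      exact mul_le_mul_of_nonneg_left (pow_le_pow_left₀ hε.le hfar 2) (abs_nonneg C)
    nlinarith [sq_nonneg (b - u), abs_nonneg L]

theorem integrableOn_Ioo_of_abs_le {f : ℝ → ℝ} {a b C : ℝ} (hf : Measurable f)
    (h : ∀ u ∈ Ioo a b, |f u| ≤ C) : IntegrableOn f (Ioo a b) :=
  Measure.integrableOn_of_bounded (M := C) measure_Ioo_lt_top.ne hf.aestronglyMeasurable
    ((ae_restrict_iff' measurableSet_Ioo).2 (.of_forall h))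

theorem setIntegral_Ioo_le {f : ℝ → ℝ} {a b C : ℝ} (hab : a ≤ b)
    (hf : IntegrableOn f (Ioo a b)) (h : ∀ u ∈ Ioo a b, f u ≤ C) :
    ∫ u in Ioo a b, f u ≤ C * (b - a) := by
  have := setIntegral_mono_on hf (integrableOn_const measure_Ioo_lt_top.ne) measurableSet_Ioo h
  simpa [setIntegral_const, Real.volume_real_Ioo_of_le hab, mul_comm] using this

theorem mul_le_setIntegral_Ioo {f : ℝ → ℝ} {a b c d m : ℝ} (hac : a ≤ c) (hcd : c ≤ d)
    (hdb : d ≤ b) (hf : IntegrableOn f (Ioo a b)) (hf0 : ∀ u ∈ Ioo a b, 0 ≤ f u)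
    (hm : ∀ u ∈ Ioo c d, m ≤ f u) :
    m * (d - c) ≤ ∫ u in Ioo a b, f u := by
  have hsub : Ioo c d ⊆ Ioo a b := Ioo_subset_Ioo hac hdb
  calc m * (d - c) = m * volume.real (Ioo c d) := by rw [Real.volume_real_Ioo_of_le hcd]
    _ ≤ ∫ u in Ioo c d, f u :=
      setIntegral_ge_of_const_le_real measurableSet_Ioo measure_Ioo_lt_top.ne hm (hf.mono_set hsub)
    _ ≤ ∫ u in Ioo a b, f u :=
      setIntegral_mono_set hf ((ae_restrict_iff' measurableSet_Ioo).2 (.of_forall hf0))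
        hsub.eventuallyLE

theorem integrableOn_Ioo_comp_neg {f : ℝ → ℝ} {b : ℝ} (hf : IntegrableOn f (Ioo (-b) b)) :
    IntegrableOn (fun u => f (-u)) (Ioo (-b) b) := by
  have := ((Measure.measurePreserving_neg (volume : Measure ℝ)).integrableOn_comp_preimage
    (Homeomorph.neg ℝ).measurableEmbedding).2 hf
  simpa [Function.comp_def, and_comm] using this

theorem setIntegral_Ioo_comp_neg (f : ℝ → ℝ) (b : ℝ) :
    ∫ u in Ioo (-b) b, f (-u) = ∫ u in Ioo (-b) b, f u := by
  have := (Measure.measurePreserving_neg (volume : Measure ℝ)).setIntegral_preimage_emb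
    (Homeomorph.neg ℝ).measurableEmbedding f (Ioo (-b) b)
  simpa [and_comm] using this

theorem two_mul_setIntegral_Ioo_eq {f : ℝ → ℝ} {b : ℝ} (hf : IntegrableOn f (Ioo (-b) b)) :
    2 * ∫ u in Ioo (-b) b, f u = ∫ u in Ioo (-b) b, (f u + f (-u)) := by
  rw [integral_add hf (integrableOn_Ioo_comp_neg hf), setIntegral_Ioo_comp_neg, two_mul]

theorem exists_pow_div_sq_sub_pow_div_sq {n : ℕ} (hn : n ≤ 1) {x y c ξ B : ℝ} (hξ : 0 < ξ)
    (hξx : ξ ≤ x) (hxy : x ≤ y) (hyB : y ≤ B) (hc : 0 ≤ c) (hx : 0 < x ^ 2 - c) :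
    ∃ Q, ξ ^ (n + 1) * (y ^ 2 - c) ≤ Q ∧ Q ≤ 4 * B ^ (n + 3) ∧
      x ^ n / (x ^ 2 - c) ^ 2 - y ^ n / (y ^ 2 - c) ^ 2 =
        (y - x) * Q / ((x ^ 2 - c) ^ 2 * (y ^ 2 - c) ^ 2) := by
  have hx0 : 0 < x := hξ.trans_le hξx
  have hy : x ^ 2 - c ≤ y ^ 2 - c := by nlinarith
  have hxy0 : 0 ≤ x * y := by nlinarith
  have hxy' : ξ * ξ ≤ x * y := mul_le_mul hξx (hξx.trans hxy) hξ.le hx0.le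
  have hyB2 : y ^ 2 ≤ B ^ 2 := pow_le_pow_left₀ (by linarith) hyB 2
  have hxyB : x * y ≤ B ^ 2 := by nlinarith
  rw [div_sub_div _ _ (pow_ne_zero 2 hx.ne') (pow_ne_zero 2 (hx.trans_le hy).ne')]
  interval_cases n <;> simp only [zero_add, Nat.reduceAdd, pow_zero, pow_one]
  · refine ⟨(x + y) * (x ^ 2 + y ^ 2 - 2 * c), ?_, ?_, ?_⟩
    · nlinarith [mul_le_mul (by linarith : ξ ≤ x + y)
        (by linarith : y ^ 2 - c ≤ x ^ 2 + y ^ 2 - 2 * c) (by linarith) (by linarith)]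
    · nlinarith [mul_le_mul (by linarith : x + y ≤ 2 * B)
        (by nlinarith : x ^ 2 + y ^ 2 - 2 * c ≤ 2 * B ^ 2) (by linarith) (by linarith)]
    · congr 1; ring
  · -- `Q = xy (x² - c) + xy (y² - c) + ((xy)² - c²)`, a sum of nonnegative terms.
    refine ⟨x * y * (x ^ 2 + x * y + y ^ 2) - 2 * c * (x * y) - c ^ 2, ?_, ?_, ?_⟩
    · have hxyc : c ≤ x * y := by nlinarith
      nlinarith [mul_le_mul hxy' hy (by linarith) hxy0, mul_nonneg hxy0 hx.le,
        mul_le_mul hxyc hxyc hc hxy0]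
    · nlinarith [mul_le_mul hxyB (by nlinarith : x ^ 2 + x * y + y ^ 2 ≤ 3 * B ^ 2)
        (by positivity) (by positivity), mul_nonneg hc hxy0]
    · congr 1; ring

/-- With `a = τ_*(r)/2` and `r = |k|`, this is the denominator `(τ_*(k)/2 − |k|u)² − |k|⁴/4`. -/
noncomputable def dispDen (a r u : ℝ) : ℝ := (a - r * u) ^ 2 - r ^ 4 / 4

noncomputable def kernel (φ : ℝ → ℝ) (n m : ℕ) (a r u : ℝ) : ℝ :=
  (a - r * u) ^ n * u ^ m * φ u / dispDen a r u ^ 2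

/-- The pairs `(a, r) = (τ_*(r)/2, r)`, `0 ≤ r ≤ κ₀`, all satisfy this for one choice of
`ξ > 0` and `B`; `threshold` is `τ_*(r) ≥ 2 r Υ + r²`. -/
structure Admissible (Υ ξ B a r : ℝ) : Prop where
  nonneg : 0 ≤ r
  threshold : r * Υ + r ^ 2 / 2 ≤ a
  lower : ξ ≤ a - r * Υ
  upper : a + r * Υ ≤ B

theorem kernel_add_kernel_neg {φ : ℝ → ℝ} {n m : ℕ} {a r u : ℝ} (hφe : ∀ u, φ (-u) = φ u)
    (hm : Odd m) :
    kernel φ n m a r u + kernel φ n m a r (-u) =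
      u ^ m * φ u * ((a - r * u) ^ n / dispDen a r u ^ 2 -
        (a - r * -u) ^ n / dispDen a r (-u) ^ 2) := by
  unfold kernel
  rw [hφe, hm.neg_pow]
  ring

namespace Admissible

variable {φ : ℝ → ℝ} {Υ ξ B H K δ a r u : ℝ} {n m : ℕ}

theorem mul_mem_Icc (h : Admissible Υ ξ B a r) (hu : u ∈ Icc (-Υ) Υ) :
    r * u ∈ Icc (-(r * Υ)) (r * Υ) := by
  constructor <;> nlinarith [h.nonneg, hu.1, hu.2]

theorem le_sub_mul (h : Admissible Υ ξ B a r) (hu : u ∈ Icc (-Υ) Υ) : ξ ≤ a - r * u := by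
  linarith [h.lower, (h.mul_mem_Icc hu).2]

theorem sq_div_two_le_sub_mul (h : Admissible Υ ξ B a r) (hu : u ∈ Icc (-Υ) Υ) :
    r ^ 2 / 2 ≤ a - r * u := by
  linarith [h.threshold, (h.mul_mem_Icc hu).2]

theorem sub_mul_le (h : Admissible Υ ξ B a r) (hu : u ∈ Icc (-Υ) Υ) : a - r * u ≤ B := by
  linarith [h.upper, (h.mul_mem_Icc hu).1]

theorem dispDen_nonneg (h : Admissible Υ ξ B a r) (hu : u ∈ Icc (-Υ) Υ) :
    0 ≤ dispDen a r u := by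
  have := h.sq_div_two_le_sub_mul hu
  unfold dispDen
  nlinarith [sq_nonneg r]

theorem dispDen_sq_le (h : Admissible Υ ξ B a r) (hu : u ∈ Icc (-Υ) Υ) :
    dispDen a r u ^ 2 ≤ B ^ 4 := by
  have h₁ := h.sq_div_two_le_sub_mul hu
  have h₂ := h.sub_mul_le hu
  have hD : dispDen a r u ≤ B ^ 2 := by
    unfold dispDen
    nlinarith [sq_nonneg r, pow_le_pow_left₀ (by nlinarith [sq_nonneg r]) h₂ 2]
  calc dispDen a r u ^ 2 ≤ (B ^ 2) ^ 2 := pow_le_pow_left₀ (h.dispDen_nonneg hu) hD 2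
    _ = B ^ 4 := by ring

/-- If `r ^ 2 ≤ ξ` the denominator is at least `ξ ^ 2 / 2`; otherwise `r ^ 2 > ξ` and the factor
`a - r u - r ^ 2 / 2 ≥ r (Υ - u)` controls it. -/
theorem mul_sq_le_dispDen_sq (h : Admissible Υ ξ B a r) (hξ : 0 < ξ) (hu : u ∈ Ico (-Υ) Υ) :
    min (ξ ^ 4 / (16 * Υ ^ 2)) (ξ ^ 3) * (Υ - u) ^ 2 ≤ dispDen a r u ^ 2 := by
  have hu' : u ∈ Icc (-Υ) Υ := Ico_subset_Icc_self hu
  have hΥ : 0 < Υ := by linarith [hu.1, hu.2]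
  have hx := h.le_sub_mul hu'
  have hfac : dispDen a r u = (a - r * u - r ^ 2 / 2) * (a - r * u + r ^ 2 / 2) := by
    unfold dispDen; ring
  have hedge : r * (Υ - u) ≤ a - r * u - r ^ 2 / 2 := by linarith [h.threshold]
  have hΥu : 0 < Υ - u := by linarith [hu.2]
  rcases le_or_gt (r ^ 2) ξ with hr | hr
  · have hD : ξ ^ 2 / 2 ≤ dispDen a r u := by
      rw [hfac]
      nlinarith [mul_le_mul (by linarith : ξ / 2 ≤ a - r * u - r ^ 2 / 2)
        (by nlinarith : ξ ≤ a - r * u + r ^ 2 / 2) hξ.le (by linarith)]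
    have hsq : (Υ - u) ^ 2 ≤ 4 * Υ ^ 2 := by nlinarith [hu.1]
    calc min (ξ ^ 4 / (16 * Υ ^ 2)) (ξ ^ 3) * (Υ - u) ^ 2
        ≤ ξ ^ 4 / (16 * Υ ^ 2) * (4 * Υ ^ 2) :=
          mul_le_mul (min_le_left _ _) hsq (by positivity) (by positivity)
      _ = (ξ ^ 2 / 2) ^ 2 := by field_simp; ring
      _ ≤ dispDen a r u ^ 2 := pow_le_pow_left₀ (by positivity) hD 2
  · have hD : r * (Υ - u) * ξ ≤ dispDen a r u := by
      rw [hfac]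
      exact mul_le_mul hedge (by nlinarith) hξ.le (by nlinarith [h.nonneg])
    calc min (ξ ^ 4 / (16 * Υ ^ 2)) (ξ ^ 3) * (Υ - u) ^ 2
        ≤ ξ ^ 3 * (Υ - u) ^ 2 := mul_le_mul_of_nonneg_right (min_le_right _ _) (by positivity)
      _ ≤ (r * (Υ - u) * ξ) ^ 2 := by
          nlinarith [sq_nonneg (ξ * (Υ - u)), mul_pos hξ (mul_pos hΥu hΥu)]
      _ ≤ dispDen a r u ^ 2 := pow_le_pow_left₀ (by have := h.nonneg; positivity) hD 2

theorem dispDen_pos (h : Admissible Υ ξ B a r) (hξ : 0 < ξ) (hu : u ∈ Ico (-Υ) Υ) :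
    0 < dispDen a r u := by
  have hΥ : 0 < Υ := by linarith [hu.1, hu.2]
  have hpos : 0 < min (ξ ^ 4 / (16 * Υ ^ 2)) (ξ ^ 3) * (Υ - u) ^ 2 :=
    mul_pos (lt_min (by positivity) (by positivity)) (by nlinarith [hu.2])
  exact lt_of_le_of_ne (h.dispDen_nonneg (Ico_subset_Icc_self hu)) fun h0 => by
    nlinarith [h.mul_sq_le_dispDen_sq hξ hu, h0.symm]

theorem div_dispDen_sq_le (h : Admissible Υ ξ B a r) (hξ : 0 < ξ) (hK0 : 0 ≤ K)
    (hK : ∀ u ∈ Ico (-Υ) Υ, φ u ≤ K * (Υ - u) ^ 2) (hu : u ∈ Ico (-Υ) Υ) :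
    φ u / dispDen a r u ^ 2 ≤ K / min (ξ ^ 4 / (16 * Υ ^ 2)) (ξ ^ 3) := by
  have hΥ : 0 < Υ := by linarith [hu.1, hu.2]
  have hΥu : 0 < Υ - u := by linarith [hu.2]
  have hc : 0 < min (ξ ^ 4 / (16 * Υ ^ 2)) (ξ ^ 3) := lt_min (by positivity) (by positivity)
  calc φ u / dispDen a r u ^ 2 ≤ K * (Υ - u) ^ 2 / dispDen a r u ^ 2 :=
        div_le_div_of_nonneg_right (hK u hu) (sq_nonneg _)
    _ ≤ K * (Υ - u) ^ 2 / (min (ξ ^ 4 / (16 * Υ ^ 2)) (ξ ^ 3) * (Υ - u) ^ 2) :=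
        div_le_div_of_nonneg_left (by positivity) (by positivity) (h.mul_sq_le_dispDen_sq hξ hu)
    _ = K / min (ξ ^ 4 / (16 * Υ ^ 2)) (ξ ^ 3) := by field_simp

theorem mul_min_le_sq_sub (h : Admissible Υ ξ B a r) (hΥ : 0 < Υ) (hξ : 0 < ξ) :
    ξ * min ξ (2 * Υ ^ 2) ≤ a ^ 2 - r ^ 4 / 4 := by
  have hfac : a ^ 2 - r ^ 4 / 4 = (a - r ^ 2 / 2) * (a + r ^ 2 / 2) := by ring
  have hr := h.nonneg
  have ha : ξ ≤ a + r ^ 2 / 2 := by nlinarith [h.lower]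
  rw [hfac, mul_comm ξ]
  rcases le_or_gt r (2 * Υ) with hr2 | hr2
  · have : ξ ≤ a - r ^ 2 / 2 := by nlinarith [h.lower]
    exact mul_le_mul ((min_le_left _ _).trans this) ha hξ.le (by linarith)
  · have : 2 * Υ ^ 2 ≤ a - r ^ 2 / 2 := by nlinarith [h.threshold]
    exact mul_le_mul ((min_le_right _ _).trans this) ha hξ.le (by nlinarith [sq_nonneg Υ])

theorem le_dispDen_neg (h : Admissible Υ ξ B a r) (hΥ : 0 < Υ) (hξ : 0 < ξ) (hu : 0 ≤ u) :
    ξ * min ξ (2 * Υ ^ 2) ≤ dispDen a r (-u) := by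
  have ha : 0 ≤ a := by nlinarith [h.threshold, h.nonneg]
  have : a ^ 2 ≤ (a - r * -u) ^ 2 := pow_le_pow_left₀ ha (by nlinarith [h.nonneg]) 2
  have := h.mul_min_le_sq_sub hΥ hξ
  unfold dispDen
  linarith

theorem abs_kernel_le (h : Admissible Υ ξ B a r) (hφ : ∀ u, 0 ≤ φ u)
    (hH : ∀ u ∈ Ico (-Υ) Υ, φ u / dispDen a r u ^ 2 ≤ H) (hu : u ∈ Ioo (-Υ) Υ) :
    |kernel φ n m a r u| ≤ B ^ n * Υ ^ m * H := by
  have hu' : u ∈ Icc (-Υ) Υ := Ioo_subset_Icc_self hu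
  have hx : 0 ≤ a - r * u := by nlinarith [h.sq_div_two_le_sub_mul hu']
  have hB : 0 ≤ B := hx.trans (h.sub_mul_le hu')
  have hΥ : 0 ≤ Υ := by linarith [hu.1, hu.2]
  rw [kernel, mul_div_assoc, abs_mul, abs_mul, abs_pow, abs_pow, abs_of_nonneg hx,
    abs_of_nonneg (div_nonneg (hφ u) (sq_nonneg _))]
  exact mul_le_mul
    (mul_le_mul (pow_le_pow_left₀ hx (h.sub_mul_le hu') n)
      (pow_le_pow_left₀ (abs_nonneg u) (abs_le.2 ⟨hu.1.le, hu.2.le⟩) m) (by positivity)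
      (by positivity))
    (hH u (Ioo_subset_Ico_self hu)) (div_nonneg (hφ u) (sq_nonneg _)) (by positivity)

theorem integrableOn_kernel (h : Admissible Υ ξ B a r) (hφ : ∀ u, 0 ≤ φ u)
    (hφm : Measurable φ) (hH : ∀ u ∈ Ico (-Υ) Υ, φ u / dispDen a r u ^ 2 ≤ H) :
    IntegrableOn (kernel φ n m a r) (Ioo (-Υ) Υ) :=
  integrableOn_Ioo_of_abs_le (by unfold kernel dispDen; fun_prop)
    fun _ hu => h.abs_kernel_le hφ hH hu

theorem kernel_nonneg (h : Admissible Υ ξ B a r) (hφ : ∀ u, 0 ≤ φ u) (hm : Even m)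
    (hu : u ∈ Icc (-Υ) Υ) : 0 ≤ kernel φ n m a r u := by
  have hx : 0 ≤ a - r * u := by nlinarith [h.sq_div_two_le_sub_mul hu]
  have := hm.pow_nonneg u
  have := hφ u
  unfold kernel
  positivity

theorem le_kernel (h : Admissible Υ ξ B a r) (hΥ : 0 < Υ) (hξ : 0 < ξ) (hφ : ∀ u, 0 ≤ φ u)
    (hδ : 0 ≤ δ) (hu : u ∈ Icc (Υ / 4) (Υ / 2)) (hδu : δ ≤ φ u) :
    ξ ^ n * (Υ / 4) ^ m * δ / B ^ 4 ≤ kernel φ n m a r u := by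
  have hu' : u ∈ Ico (-Υ) Υ := ⟨by linarith [hu.1], by linarith [hu.2]⟩
  have hx := h.le_sub_mul (Ico_subset_Icc_self hu')
  have hu0 : 0 ≤ u := by linarith [hu.1]
  have hx0 : 0 ≤ a - r * u := hξ.le.trans hx
  have hB : 0 < B := hξ.trans_le (hx.trans (h.sub_mul_le (Ico_subset_Icc_self hu')))
  have hD := h.dispDen_pos hξ hu'
  exact div_le_div₀ (mul_nonneg (mul_nonneg (pow_nonneg hx0 n) (pow_nonneg hu0 m)) (hφ u))
    (mul_le_mul (mul_le_mul (pow_le_pow_left₀ hξ.le hx n)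
      (pow_le_pow_left₀ (by positivity) hu.1 m) (by positivity) (pow_nonneg hx0 n)) hδu hδ
      (mul_nonneg (pow_nonneg hx0 n) (pow_nonneg hu0 m))) (by positivity)
    (h.dispDen_sq_le (Ico_subset_Icc_self hu'))

theorem setIntegral_kernel_mem_Icc_of_even (h : Admissible Υ ξ B a r) (hΥ : 0 < Υ)
    (hξ : 0 < ξ) (hφ : ∀ u, 0 ≤ φ u) (hφm : Measurable φ)
    (hH : ∀ u ∈ Ico (-Υ) Υ, φ u / dispDen a r u ^ 2 ≤ H) (hδ : 0 ≤ δ)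
    (hδφ : ∀ u ∈ Icc (Υ / 4) (Υ / 2), δ ≤ φ u) (hm : Even m) :
    ∫ u in Ioo (-Υ) Υ, kernel φ n m a r u ∈
      Icc (ξ ^ n * (Υ / 4) ^ m * δ / B ^ 4 * (Υ / 4)) (B ^ n * Υ ^ m * H * (2 * Υ)) := by
  have hint := h.integrableOn_kernel (n := n) (m := m) hφ hφm hH
  constructor
  · have := mul_le_setIntegral_Ioo (c := Υ / 4) (d := Υ / 2) (by linarith) (by linarith)
      (by linarith) hint (fun u hu => h.kernel_nonneg hφ hm (Ioo_subset_Icc_self hu))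
      fun u hu => h.le_kernel hΥ hξ hφ hδ (Ioo_subset_Icc_self hu)
        (hδφ u (Ioo_subset_Icc_self hu))
    linarith
  · have := setIntegral_Ioo_le (by linarith) hint
      fun u hu => (le_abs_self _).trans (h.abs_kernel_le hφ hH hu)
    linarith

theorem exists_kernel_add_kernel_neg_eq (h : Admissible Υ ξ B a r) (hΥ : 0 < Υ) (hξ : 0 < ξ)
    (hφe : ∀ u, φ (-u) = φ u) (hn : n ≤ 1) (hm : Odd m) (hu : u ∈ Ico 0 Υ) :
    ∃ Q, ξ ^ (n + 1) * (ξ * min ξ (2 * Υ ^ 2)) ≤ Q ∧ Q ≤ 4 * B ^ (n + 3) ∧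
      kernel φ n m a r u + kernel φ n m a r (-u) =
        2 * r * u * Q * u ^ m * φ u / (dispDen a r u ^ 2 * dispDen a r (-u) ^ 2) := by
  have hu' : u ∈ Ico (-Υ) Υ := ⟨by linarith [hu.1], hu.2⟩
  have hnu : -u ∈ Icc (-Υ) Υ := ⟨by linarith [hu.2], by linarith [hu.1]⟩
  obtain ⟨Q, hQl, hQu, hQ⟩ := exists_pow_div_sq_sub_pow_div_sq hn hξ
    (h.le_sub_mul (Ico_subset_Icc_self hu'))
    (by nlinarith [h.nonneg, hu.1] : a - r * u ≤ a - r * -u) (h.sub_mul_le hnu)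
    (by positivity : (0 : ℝ) ≤ r ^ 4 / 4) (h.dispDen_pos hξ hu')
  refine ⟨Q, le_trans ?_ hQl, hQu, ?_⟩
  · exact mul_le_mul_of_nonneg_left (h.le_dispDen_neg hΥ hξ hu.1) (by positivity)
  · rw [kernel_add_kernel_neg hφe hm]
    unfold dispDen
    rw [hQ]
    ring

theorem kernel_add_kernel_neg_mem_Icc (h : Admissible Υ ξ B a r) (hΥ : 0 < Υ) (hξ : 0 < ξ)
    (hφ : ∀ u, 0 ≤ φ u) (hφe : ∀ u, φ (-u) = φ u) (hn : n ≤ 1) (hm : Odd m)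
    (hH : ∀ u ∈ Ico (-Υ) Υ, φ u / dispDen a r u ^ 2 ≤ H) (hu : u ∈ Ico 0 Υ) :
    kernel φ n m a r u + kernel φ n m a r (-u) ∈
      Icc 0 (8 * Υ ^ (m + 1) * B ^ (n + 3) * H / (ξ * min ξ (2 * Υ ^ 2)) ^ 2 * r) := by
  obtain ⟨Q, hQl, hQu, hQ⟩ := h.exists_kernel_add_kernel_neg_eq hΥ hξ hφe hn hm hu
  have hu' : u ∈ Ico (-Υ) Υ := ⟨by linarith [hu.1], hu.2⟩
  have hu0 := hu.1
  have hr := h.nonneg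
  have hβ : 0 < ξ * min ξ (2 * Υ ^ 2) := mul_pos hξ (lt_min hξ (by positivity))
  have hQ0 : 0 ≤ Q := le_trans (by positivity) hQl
  have hB : 0 ≤ B := by
    nlinarith [h.sub_mul_le (Ico_subset_Icc_self hu'),
      h.sq_div_two_le_sub_mul (Ico_subset_Icc_self hu')]
  have hφD : 0 ≤ φ u / dispDen a r u ^ 2 := div_nonneg (hφ u) (sq_nonneg _)
  have hH0 : 0 ≤ H := hφD.trans (hH u hu')
  have hnum : 2 * r * u * Q * u ^ m ≤ 2 * r * Υ * (4 * B ^ (n + 3)) * Υ ^ m := by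
    gcongr <;> exact hu.2.le
  have hsplit : kernel φ n m a r u + kernel φ n m a r (-u) =
      2 * r * u * Q * u ^ m * (φ u / dispDen a r u ^ 2) / dispDen a r (-u) ^ 2 := by
    rw [hQ]; field_simp
  rw [hsplit]
  refine ⟨by positivity, ?_⟩
  calc 2 * r * u * Q * u ^ m * (φ u / dispDen a r u ^ 2) / dispDen a r (-u) ^ 2
      ≤ 2 * r * Υ * (4 * B ^ (n + 3)) * Υ ^ m * H / (ξ * min ξ (2 * Υ ^ 2)) ^ 2 :=
        div_le_div₀ (by positivity) (mul_le_mul hnum (hH u hu') hφD (by positivity))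
          (by positivity) (pow_le_pow_left₀ hβ.le (h.le_dispDen_neg hΥ hξ hu.1) 2)
    _ = 8 * Υ ^ (m + 1) * B ^ (n + 3) * H / (ξ * min ξ (2 * Υ ^ 2)) ^ 2 * r := by ring

theorem le_kernel_add_kernel_neg (h : Admissible Υ ξ B a r) (hΥ : 0 < Υ) (hξ : 0 < ξ)
    (hφe : ∀ u, φ (-u) = φ u) (hn : n ≤ 1) (hm : Odd m) (hδ : 0 ≤ δ)
    (hu : u ∈ Icc (Υ / 4) (Υ / 2)) (hδu : δ ≤ φ u) :
    Υ / 2 * (Υ / 4) ^ m * δ * (ξ ^ (n + 1) * (ξ * min ξ (2 * Υ ^ 2))) / B ^ 8 * r ≤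
      kernel φ n m a r u + kernel φ n m a r (-u) := by
  have hu' : u ∈ Ico 0 Υ := ⟨by linarith [hu.1], by linarith [hu.2]⟩
  have huΥ : u ∈ Icc (-Υ) Υ := ⟨by linarith [hu.1], hu'.2.le⟩
  have hnu : -u ∈ Icc (-Υ) Υ := ⟨by linarith [hu'.2], by linarith [hu.1]⟩
  obtain ⟨Q, hQl, -, hQ⟩ := h.exists_kernel_add_kernel_neg_eq hΥ hξ hφe hn hm hu'
  have hu0 := hu'.1
  have hu4 := hu.1
  have hr := h.nonneg
  have hβ : 0 < ξ * min ξ (2 * Υ ^ 2) := mul_pos hξ (lt_min hξ (by positivity))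
  have hQ0 : 0 ≤ Q := le_trans (by positivity) hQl
  have hD := h.dispDen_pos hξ ⟨huΥ.1, hu'.2⟩
  have hDneg := hβ.trans_le (h.le_dispDen_neg hΥ hξ hu0)
  have hnum : r * (Υ / 2) * (Υ / 4) ^ m * δ * (ξ ^ (n + 1) * (ξ * min ξ (2 * Υ ^ 2))) ≤
      2 * r * u * Q * u ^ m * φ u :=
    calc r * (Υ / 2) * (Υ / 4) ^ m * δ * (ξ ^ (n + 1) * (ξ * min ξ (2 * Υ ^ 2)))
        = 2 * r * (Υ / 4) * (ξ ^ (n + 1) * (ξ * min ξ (2 * Υ ^ 2))) * (Υ / 4) ^ m * δ := by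
          ring
      _ ≤ 2 * r * u * Q * u ^ m * φ u := by gcongr
  rw [hQ]
  calc Υ / 2 * (Υ / 4) ^ m * δ * (ξ ^ (n + 1) * (ξ * min ξ (2 * Υ ^ 2))) / B ^ 8 * r
      = r * (Υ / 2) * (Υ / 4) ^ m * δ * (ξ ^ (n + 1) * (ξ * min ξ (2 * Υ ^ 2))) /
          (B ^ 4 * B ^ 4) := by ring
    _ ≤ 2 * r * u * Q * u ^ m * φ u / (dispDen a r u ^ 2 * dispDen a r (-u) ^ 2) :=
        div_le_div₀ (le_trans (by positivity) hnum) hnum (by positivity)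
          (mul_le_mul (h.dispDen_sq_le huΥ) (h.dispDen_sq_le hnu) (by positivity)
            (by positivity))

theorem setIntegral_kernel_mem_Icc_of_odd (h : Admissible Υ ξ B a r) (hΥ : 0 < Υ)
    (hξ : 0 < ξ) (hφ : ∀ u, 0 ≤ φ u) (hφe : ∀ u, φ (-u) = φ u) (hφm : Measurable φ)
    (hH : ∀ u ∈ Ico (-Υ) Υ, φ u / dispDen a r u ^ 2 ≤ H) (hδ : 0 ≤ δ)
    (hδφ : ∀ u ∈ Icc (Υ / 4) (Υ / 2), δ ≤ φ u) (hn : n ≤ 1) (hm : Odd m) :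
    ∫ u in Ioo (-Υ) Υ, kernel φ n m a r u ∈
      Icc (Υ / 2 * (Υ / 4) ^ m * δ * (ξ ^ (n + 1) * (ξ * min ξ (2 * Υ ^ 2))) / B ^ 8 *
          (Υ / 8) * r)
        (8 * Υ ^ (m + 1) * B ^ (n + 3) * H / (ξ * min ξ (2 * Υ ^ 2)) ^ 2 * Υ * r) := by
  have hint := h.integrableOn_kernel (n := n) (m := m) hφ hφm hH
  have hsym := two_mul_setIntegral_Ioo_eq hint
  have hS : ∀ u ∈ Ioo (-Υ) Υ, kernel φ n m a r u + kernel φ n m a r (-u) ∈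
      Icc 0 (8 * Υ ^ (m + 1) * B ^ (n + 3) * H / (ξ * min ξ (2 * Υ ^ 2)) ^ 2 * r) := by
    intro u hu
    rcases le_total 0 u with hu0 | hu0
    · exact h.kernel_add_kernel_neg_mem_Icc hΥ hξ hφ hφe hn hm hH ⟨hu0, hu.2⟩
    · have := h.kernel_add_kernel_neg_mem_Icc hΥ hξ hφ hφe hn hm hH
        (u := -u) ⟨by linarith, by linarith [hu.1]⟩
      rwa [neg_neg, add_comm (kernel φ n m a r (-u))] at this
  have hSint := hint.add (integrableOn_Ioo_comp_neg hint)
  constructor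
  · have := mul_le_setIntegral_Ioo (c := Υ / 4) (d := Υ / 2) (by linarith) (by linarith)
      (by linarith) hSint (fun u hu => (hS u hu).1)
      fun u hu => h.le_kernel_add_kernel_neg hΥ hξ hφe hn hm hδ (Ioo_subset_Icc_self hu)
        (hδφ u (Ioo_subset_Icc_self hu))
    simp only [Pi.add_apply] at this
    linarith
  · have := setIntegral_Ioo_le (by linarith) hSint fun u hu => (hS u hu).2
    simp only [Pi.add_apply] at this
    linarith

end Admissible

theorem sq_bounds_of_setIntegral_div_dispDen_eq {φ : ℝ → ℝ} {Υ a r : ℝ} (hΥ : 0 < Υ)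
    (hφ : ∀ u, 0 ≤ φ u) (hφi : IntegrableOn φ (Ioo (-Υ) Υ)) (hr : 0 < r)
    (ha : r * Υ + r ^ 2 / 2 ≤ a) (heq : ∫ u in Ioo (-Υ) Υ, φ u / dispDen a r u = 2) :
    (∫ u in Ioo (-Υ) Υ, φ u) / 2 ≤ (a + r * Υ) ^ 2 ∧
      (a - r * Υ) ^ 2 - r ^ 4 / 4 ≤ (∫ u in Ioo (-Υ) Υ, φ u) / 2 := by
  have hD : ∀ u ∈ Ioo (-Υ) Υ, 0 < dispDen a r u ∧ dispDen a r Υ ≤ dispDen a r u ∧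
      dispDen a r u ≤ (a + r * Υ) ^ 2 := by
    intro u hu
    have h₁ : r * u < r * Υ := mul_lt_mul_of_pos_left hu.2 hr
    have h₂ : -(r * Υ) < r * u := by nlinarith [hu.1]
    unfold dispDen
    exact ⟨by nlinarith, by nlinarith, by nlinarith [sq_nonneg r]⟩
  -- the integral is `2 ≠ 0`, so the integrand cannot be non-integrable
  have hint : IntegrableOn (fun u => φ u / dispDen a r u) (Ioo (-Υ) Υ) :=
    Integrable.of_integral_ne_zero (by rw [heq]; norm_num)
  have hM : 0 ≤ ∫ u in Ioo (-Υ) Υ, φ u := setIntegral_nonneg measurableSet_Ioo fun u _ => hφ u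
  constructor
  · have := setIntegral_mono_on (hφi.div_const ((a + r * Υ) ^ 2)) hint measurableSet_Ioo
      fun u hu => div_le_div_of_nonneg_left (hφ u) (hD u hu).1 (hD u hu).2.2
    rw [integral_div, heq, div_le_iff₀ (by nlinarith [mul_pos hr hΥ])] at this
    linarith
  · change dispDen a r Υ ≤ _
    rcases le_or_gt (dispDen a r Υ) 0 with hDΥ | hDΥ
    · linarith
    · have := setIntegral_mono_on hint (hφi.div_const (dispDen a r Υ)) measurableSet_Ioo
        fun u hu => div_le_div_of_nonneg_left (hφ u) hDΥ (hD u hu).2.1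
      rw [integral_div, heq, le_div_iff₀ hDΥ] at this
      linarith

/-- `ξ` comes from `s ≤ a + r Υ` when `2 r Υ ≤ s / 2` and from `r ^ 2 / 2 ≤ a - r Υ` otherwise;
`B` from `a - r Υ ≤ s + r ^ 2 / 2`. -/
theorem admissible_of_sq_bounds {Υ κ₀ s a r : ℝ} (hΥ : 0 < Υ) (hs : 0 < s) (hr : 0 ≤ r)
    (hrκ : r ≤ κ₀) (ha : r * Υ + r ^ 2 / 2 ≤ a) (h₁ : s ^ 2 ≤ (a + r * Υ) ^ 2)
    (h₂ : (a - r * Υ) ^ 2 - r ^ 4 / 4 ≤ s ^ 2) :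
    Admissible Υ (min (s / 2) (s ^ 2 / (32 * Υ ^ 2))) (s + κ₀ ^ 2 / 2 + 2 * κ₀ * Υ) a r := by
  have hrΥ : 0 ≤ r * Υ := mul_nonneg hr hΥ.le
  have hs₁ : s ≤ a + r * Υ := le_of_sq_le_sq h₁ (by nlinarith)
  have hs₂ : a - r * Υ ≤ s + r ^ 2 / 2 :=
    le_of_sq_le_sq (by nlinarith [sq_nonneg r]) (by positivity)
  refine ⟨hr, ha, ?_, ?_⟩
  · rcases le_or_gt (2 * r * Υ) (s / 2) with hsmall | hlarge
    · exact (min_le_left _ _).trans (by linarith)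
    · refine (min_le_right _ _).trans ?_
      rw [div_le_iff₀ (by positivity)]
      nlinarith
  · nlinarith [pow_le_pow_left₀ hr hrκ 2, mul_le_mul_of_nonneg_right hrκ hΥ.le]

theorem exists_admissible_of_dispersion {φ τ : ℝ → ℝ} {Υ κ₀ : ℝ} (hΥ : 0 < Υ)
    (hφ : ∀ u, 0 ≤ φ u) (hφi : IntegrableOn φ (Ioo (-Υ) Υ)) (hκ₀ : 0 < κ₀) (hτ₀ : 0 < τ 0)
    (hτ₀M : (τ 0 / 2) ^ 2 = (∫ u in Ioo (-Υ) Υ, φ u) / 2)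
    (hτ : ∀ r, 0 < r → r ≤ κ₀ →
      2 * r * Υ + r ^ 2 ≤ τ r ∧ ∫ u in Ioo (-Υ) Υ, φ u / dispDen (τ r / 2) r u = 2) :
    ∃ ξ B, 0 < ξ ∧ 0 < B ∧ ∀ r, 0 ≤ r → r ≤ κ₀ → Admissible Υ ξ B (τ r / 2) r := by
  have hs := half_pos hτ₀
  refine ⟨min (τ 0 / 2 / 2) ((τ 0 / 2) ^ 2 / (32 * Υ ^ 2)), τ 0 / 2 + κ₀ ^ 2 / 2 + 2 * κ₀ * Υ,
    lt_min (half_pos hs) (div_pos (pow_pos hs 2) (by positivity)),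
    add_pos_of_pos_of_nonneg (add_pos_of_pos_of_nonneg hs (by positivity)) (by positivity),
    fun r hr hrκ => ?_⟩
  obtain ⟨ha, h₁, h₂⟩ : r * Υ + r ^ 2 / 2 ≤ τ r / 2 ∧ (τ 0 / 2) ^ 2 ≤ (τ r / 2 + r * Υ) ^ 2 ∧
      (τ r / 2 - r * Υ) ^ 2 - r ^ 4 / 4 ≤ (τ 0 / 2) ^ 2 := by
    rcases hr.eq_or_lt with rfl | hr
    · simpa using hs.le
    · obtain ⟨hτr, heq⟩ := hτ r hr hrκ
      rw [hτ₀M]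
      exact ⟨by linarith, sq_bounds_of_setIntegral_div_dispDen_eq hΥ hφ hφi hr (by linarith) heq⟩
  exact admissible_of_sq_bounds hΥ hs hr hrκ ha h₁ h₂

theorem exists_kernel_bounds {φ : ℝ → ℝ} {Υ ξ B K δ : ℝ} {n : ℕ} (hΥ : 0 < Υ) (hξ : 0 < ξ)
    (hB : 0 < B) (hφ : ∀ u, 0 ≤ φ u) (hφe : ∀ u, φ (-u) = φ u) (hφm : Measurable φ)
    (hK0 : 0 < K) (hK : ∀ u ∈ Ico (-Υ) Υ, φ u ≤ K * (Υ - u) ^ 2) (hδ : 0 < δ)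
    (hδφ : ∀ u ∈ Icc (Υ / 4) (Υ / 2), δ ≤ φ u) (hn : n ≤ 1) (l : ℕ) :
    ∃ c₀ C₀ : ℝ, 0 < c₀ ∧ 0 < C₀ ∧ ∀ a r, Admissible Υ ξ B a r →
      (c₀ ≤ ∫ u in Ioo (-Υ) Υ, kernel φ n (2 * l) a r u ∧
        ∫ u in Ioo (-Υ) Υ, kernel φ n (2 * l) a r u ≤ C₀) ∧
      (c₀ * r ≤ ∫ u in Ioo (-Υ) Υ, kernel φ n (2 * l + 1) a r u ∧
        ∫ u in Ioo (-Υ) Υ, kernel φ n (2 * l + 1) a r u ≤ C₀ * r) := by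
  set H := K / min (ξ ^ 4 / (16 * Υ ^ 2)) (ξ ^ 3)
  set β := ξ * min ξ (2 * Υ ^ 2)
  have hH : 0 < H := div_pos hK0 (lt_min (by positivity) (by positivity))
  have hβ : 0 < β := mul_pos hξ (lt_min hξ (by positivity))
  refine ⟨min (ξ ^ n * (Υ / 4) ^ (2 * l) * δ / B ^ 4 * (Υ / 4))
      (Υ / 2 * (Υ / 4) ^ (2 * l + 1) * δ * (ξ ^ (n + 1) * β) / B ^ 8 * (Υ / 8)),
    max (B ^ n * Υ ^ (2 * l) * H * (2 * Υ))
      (8 * Υ ^ (2 * l + 1 + 1) * B ^ (n + 3) * H / β ^ 2 * Υ),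
    lt_min (by positivity) (by positivity),
    (by positivity : (0 : ℝ) < _).trans_le (le_max_left _ _), fun a r h => ?_⟩
  have hφD := fun u hu => h.div_dispDen_sq_le hξ hK0.le hK (u := u) hu
  have he := h.setIntegral_kernel_mem_Icc_of_even (n := n) hΥ hξ hφ hφm hφD hδ.le hδφ
    (even_two_mul l)
  have ho := h.setIntegral_kernel_mem_Icc_of_odd hΥ hξ hφ hφe hφm hφD hδ.le hδφ hn
    (odd_two_mul_add_one l)
  exact ⟨⟨(min_le_left _ _).trans he.1, he.2.trans (le_max_left _ _)⟩,
    (mul_le_mul_of_nonneg_right (min_le_right _ _) h.nonneg).trans ho.1,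
    ho.2.trans (mul_le_mul_of_nonneg_right (le_max_right _ _) h.nonneg)⟩

theorem stmt13_general (Υ : ℝ) (hΥ : 0 < Υ) (φ : ℝ → ℝ)
    (hpos : ∀ u : ℝ, 0 ≤ φ u)
    (heven : ∀ u : ℝ, φ (-u) = φ u)
    (hcont : Continuous φ)
    (hppos : ∀ u : ℝ, |u| < Υ → 0 < φ u)
    (hsupp : ∀ u : ℝ, Υ ≤ |u| → φ u = 0)
    (N₁ : ℝ) (hN₁ : 2 ≤ N₁)
    (hlim : ∃ L : ℝ, 0 < L ∧
      Filter.Tendsto (fun u : ℝ => φ u / (Υ - u) ^ N₁)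
        (nhdsWithin Υ (Set.Iio Υ)) (nhds L))
    (κ₀ : ℝ) (hκ₀pos : 0 < κ₀)
    (τstar : ℝ → ℝ)
    (hτ0 : τstar 0 = Real.sqrt (2 * ∫ u : ℝ, φ u))
    (hτ : ∀ r : ℝ, 0 < r → r ≤ κ₀ →
      2 * r * Υ + r ^ 2 ≤ τstar r ∧
      (∫ u in Set.Ioo (-Υ) Υ,
        φ u / ((τstar r / 2 - r * u) ^ 2 - r ^ 4 / 4)) = 2) :
    (∀ n : ℕ, n ≤ 1 → ∀ m : ℕ, ∀ r : ℝ, 0 ≤ r → r ≤ κ₀ →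
      IntegrableOn (fun u : ℝ =>
        (τstar r / 2 - r * u) ^ n * u ^ m * φ u /
          ((τstar r / 2 - r * u) ^ 2 - r ^ 4 / 4) ^ 2) (Set.Ioo (-Υ) Υ)) ∧
    (∀ l : ℕ, ∀ n : ℕ, n ≤ 1 →
      ∃ c₀ C₀ : ℝ, 0 < c₀ ∧ 0 < C₀ ∧
        ∀ r : ℝ, 0 ≤ r → r ≤ κ₀ →
          (c₀ ≤ Ifun φ Υ τstar n (2 * l) r ∧ Ifun φ Υ τstar n (2 * l) r ≤ C₀) ∧
          (c₀ * r ≤ Ifun φ Υ τstar n (2 * l + 1) r ∧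
            Ifun φ Υ τstar n (2 * l + 1) r ≤ C₀ * r)) := by
  obtain ⟨L, -, hL⟩ := hlim
  obtain ⟨K, hK0, hK⟩ := exists_le_mul_sq_of_tendsto hcont.continuousOn (a := -Υ) hN₁ hL
  obtain ⟨δ, hδ0, hδ⟩ := exists_pos_le_of_continuousOn (isCompact_Icc (a := Υ / 4) (b := Υ / 2))
    (nonempty_Icc.2 (by linarith)) hcont.continuousOn
    fun u hu => hppos u (abs_lt.2 ⟨by linarith [hu.1], by linarith [hu.2]⟩)
  have hφi : IntegrableOn φ (Ioo (-Υ) Υ) := hcont.integrableOn_Icc.mono_set Ioo_subset_Icc_self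
  have hM : 0 < ∫ u in Ioo (-Υ) Υ, φ u := by
    have := mul_le_setIntegral_Ioo (c := Υ / 4) (d := Υ / 2) (by linarith) (by linarith)
      (by linarith) hφi (fun u _ => hpos u) fun u hu => hδ u (Ioo_subset_Icc_self hu)
    nlinarith
  have hM' : ∫ u, φ u = ∫ u in Ioo (-Υ) Υ, φ u := (setIntegral_eq_integral_of_forall_compl_eq_zero
    fun u hu => hsupp u (not_lt.1 (by rwa [mem_Ioo, ← abs_lt] at hu))).symm
  obtain ⟨ξ, B, hξ, hB, hadm⟩ := exists_admissible_of_dispersion hΥ hpos hφi hκ₀pos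
    (by rw [hτ0, hM']; positivity)
    (by rw [hτ0, hM', div_pow, Real.sq_sqrt (by positivity)]; ring) hτ
  refine ⟨fun n _ m r hr hrκ => (hadm r hr hrκ).integrableOn_kernel hpos hcont.measurable
    fun u hu => (hadm r hr hrκ).div_dispDen_sq_le hξ hK0.le hK hu, fun l n hn => ?_⟩
  obtain ⟨c₀, C₀, hc₀, hC₀, hbounds⟩ :=
    exists_kernel_bounds hΥ hξ hB hpos heven hcont.measurable hK0 hK hδ0 hδ hn l
  exact ⟨c₀, C₀, hc₀, hC₀, fun r hr hrκ => hbounds _ _ (hadm r hr hrκ)⟩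

theorem stmt13 (Υ : ℝ) (hΥ : 0 < Υ) (φ : ℝ → ℝ)
    (hpos : ∀ u : ℝ, 0 ≤ φ u)
    (heven : ∀ u : ℝ, φ (-u) = φ u)
    (hcont : Continuous φ)
    (hppos : ∀ u : ℝ, |u| < Υ → 0 < φ u)
    (hsupp : ∀ u : ℝ, Υ ≤ |u| → φ u = 0)
    (N₁ : ℝ) (hN₁ : 2 ≤ N₁)
    (hlim : ∃ L : ℝ, 0 < L ∧
      Filter.Tendsto (fun u : ℝ => φ u / (Υ - u) ^ N₁)
        (nhdsWithin Υ (Set.Iio Υ)) (nhds L))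
    (κ₀ : ℝ) (hκ₀pos : 0 < κ₀)
    (hκ₀ : κ₀ ^ 2 = (1 / 2) *
      ∫ u in Set.Ioo (-Υ) Υ, φ u / ((Υ - u) * (Υ + κ₀ - u)))
    (τstar : ℝ → ℝ)
    (hτ0 : τstar 0 = Real.sqrt (2 * ∫ u : ℝ, φ u))
    (hτ : ∀ r : ℝ, 0 < r → r ≤ κ₀ →
      2 * r * Υ + r ^ 2 ≤ τstar r ∧
      (∫ u in Set.Ioo (-Υ) Υ,
        φ u / ((τstar r / 2 - r * u) ^ 2 - r ^ 4 / 4)) = 2) :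
    (∀ n : ℕ, n ≤ 1 → ∀ m : ℕ, ∀ r : ℝ, 0 ≤ r → r ≤ κ₀ →
      IntegrableOn (fun u : ℝ =>
        (τstar r / 2 - r * u) ^ n * u ^ m * φ u /
          ((τstar r / 2 - r * u) ^ 2 - r ^ 4 / 4) ^ 2) (Set.Ioo (-Υ) Υ)) ∧
    (∀ l : ℕ, ∀ n : ℕ, n ≤ 1 →
      ∃ c₀ C₀ : ℝ, 0 < c₀ ∧ 0 < C₀ ∧
        ∀ r : ℝ, 0 ≤ r → r ≤ κ₀ →
          (c₀ ≤ Ifun φ Υ τstar n (2 * l) r ∧ Ifun φ Υ τstar n (2 * l) r ≤ C₀) ∧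
          (c₀ * r ≤ Ifun φ Υ τstar n (2 * l + 1) r ∧
            Ifun φ Υ τstar n (2 * l + 1) r ≤ C₀ * r)) :=
  stmt13_general Υ hΥ φ hpos heven hcont hppos hsupp N₁ hN₁ hlim κ₀ hκ₀pos τstar hτ0 hτ
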